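/- arXiv:2105.15013 — 5 statements merged into one kernel-verified Lean document; each statement's English description precedes it below -/
import Mathlib

section
/- For a supermodular characteristic function v on a nonempty finite set of agents N with v(∅) = 0, the Shapley value lies in the core: for every coalition C ⊆ N, ∑_{i ∈ C} φ_i(v) ≥ v(C). -/
/-- The Shapley value of agent `i` for a characteristic function `v` on the
finite set of agents `N` (taken to be all of the type `N`):
`φ_i(v) = ∑_{C ⊆ N \ {i}} (|C|!·(n−|C|−1)!/n!)·(v(C ∪ {i}) − v(C))`. -/
noncomputable def shapleyValue {N : Type*} [Fintype N] [DecidableEq N]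
    (v : Finset N → ℝ) (i : N) : ℝ :=
  ∑ C ∈ ((Finset.univ : Finset N).erase i).powerset,
    ((Nat.factorial C.card * Nat.factorial (Fintype.card N - C.card - 1) : ℝ) /
      (Nat.factorial (Fintype.card N))) * (v (insert i C) - v C)

/-!
Every ordering of the agents yields a marginal vector, paying each agent its marginal
contribution to the set of its predecessors. For a supermodular game each marginal vector
lies in the core: adding the agents of `C` in the given order, supermodularity applied to
`C` and the predecessors of its last agent shows that this agent's contribution to `C` is at
most its contribution to its predecessors. Exactly `|C|! (n - |C| - 1)!` orderings put the
set `C` before `i`, so the Shapley value is the average of the marginal vectors, and the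
core, being convex, contains it.
-/

open Finset Nat

def predecessors {N β : Type*} [Fintype N] [LT β] [DecidableLT β] (r : N → β) (i : N) :
    Finset N :=
  univ.filter fun a => r a < r i

@[simp]
lemma mem_predecessors {N β : Type*} [Fintype N] [LT β] [DecidableLT β] {r : N → β}
    {i a : N} : a ∈ predecessors r i ↔ r a < r i := by
  simp [predecessors]

lemma card_predecessors {N : Type*} [Fintype N] {n : ℕ} (τ : N ≃ Fin n) (i : N) :
    #(predecessors τ i) = τ i := by
  rw [predecessors, ← Fintype.card_subtype,
    Fintype.card_congr (τ.subtypeEquiv fun _ => Iff.rfl : {a // τ a < τ i} ≃ {j // j < τ i})]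
  simp [Fintype.card_subtype, filter_gt_eq_Iio]

section MarginalVector

variable {N β : Type*} [Fintype N] [DecidableEq N] [LinearOrder β]

def marginalVector (v : Finset N → ℝ) (r : N → β) (i : N) : ℝ :=
  v (insert i (predecessors r i)) - v (predecessors r i)

lemma le_sum_marginalVector (v : Finset N → ℝ) (h0 : v ∅ = 0)
    (hsup : ∀ A B : Finset N, v A + v B ≤ v (A ∪ B) + v (A ∩ B))
    {r : N → β} (hr : Function.Injective r) (C : Finset N) :
    v C ≤ ∑ i ∈ C, marginalVector v r i := by
  induction C using Finset.induction_on_max_value r with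
  | empty => simp [h0]
  | insert a s has hmax ih =>
    have hpred : s ⊆ predecessors r a := fun x hx =>
      mem_predecessors.2 ((hmax x hx).lt_of_ne (hr.ne (ne_of_mem_of_not_mem hx has)))
    have hunion : insert a s ∪ predecessors r a = insert a (predecessors r a) := by
      rw [insert_union, union_eq_right.2 hpred]
    have hinter : insert a s ∩ predecessors r a = s := by
      rw [insert_inter_of_notMem (by simp), inter_eq_left.2 hpred]
    have := hsup (insert a s) (predecessors r a)
    rw [hunion, hinter] at this
    rw [sum_insert has, marginalVector]
    linarith

end MarginalVector

/-- Composing with a fixed `σ : α ≃ β` over `ι` identifies the equivalences over `ι` with the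
fibre-preserving permutations of `α`. -/
lemma card_equiv_comp_eq {α β ι : Type*} [Fintype α] [Fintype β] [DecidableEq α]
    [DecidableEq β] [Fintype ι] [DecidableEq ι] (g : α → ι) (b : β → ι)
    (hcard : ∀ c, Fintype.card {a // g a = c} = Fintype.card {x // b x = c}) :
    Fintype.card {τ : α ≃ β // b ∘ τ = g} = ∏ c, (Fintype.card {a // g a = c})! := by
  obtain ⟨σ, hσ⟩ : ∃ σ : α ≃ β, ∀ a, b (σ a) = g a :=
    ⟨_, Equiv.ofFiberEquiv_map fun c => Fintype.equivOfCardEq (hcard c)⟩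
  rw [← DomMulAct.stabilizer_card g]
  refine Fintype.card_congr ((Equiv.equivCongr (Equiv.refl α) σ.symm).subtypeEquiv fun τ => ?_)
  simp only [funext_iff, Function.comp_apply]
  exact forall_congr' fun a => by simp [← hσ]

section Orderings

variable {N : Type*} [Fintype N] [DecidableEq N]

def predecessorPattern (C : Finset N) (i a : N) : Ordering :=
  if a ∈ C then .lt else if a = i then .eq else .gt

lemma predecessors_eq_iff {n : ℕ} (τ : N ≃ Fin n) {i : N} {C : Finset N} (hi : i ∉ C)
    (hC : #C < n) :
    predecessors τ i = C ↔ (compare · (⟨#C, hC⟩ : Fin n)) ∘ τ = predecessorPattern C i := by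
  constructor
  · rintro rfl
    rw [show (⟨_, hC⟩ : Fin n) = τ i from Fin.ext (card_predecessors τ i)]
    funext a
    by_cases ha : a = i
    · simp [ha, predecessorPattern]
    · simp only [Function.comp_apply, predecessorPattern, mem_predecessors, ha, if_false]
      split_ifs with hlt
      · exact compare_lt_iff_lt.2 hlt
      · exact compare_gt_iff_gt.2 ((not_lt.1 hlt).lt_of_ne (τ.injective.ne ha).symm)
  · intro h
    have hK : τ i = ⟨#C, hC⟩ := by simpa [predecessorPattern, hi] using congrFun h i
    ext a
    rw [mem_predecessors, hK, ← compare_lt_iff_lt, ← Function.comp_apply (f := (compare · _)), h]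
    simp [predecessorPattern]

lemma card_filter_predecessors_eq {i : N} {C : Finset N} (hi : i ∉ C) :
    #{τ : N ≃ Fin (Fintype.card N) | predecessors τ i = C} =
      (#C)! * (Fintype.card N - #C - 1)! := by
  have hC : #C < Fintype.card N := card_lt_univ_of_notMem hi
  have hlt : Fintype.card {a // predecessorPattern C i a = .lt} = #C := by
    simp [Fintype.card_subtype, predecessorPattern]
  have heq : Fintype.card {a // predecessorPattern C i a = .eq} = 1 := by
    rw [Fintype.card_subtype, card_eq_one]
    exact ⟨i, by ext a; by_cases a = i <;> simp_all [predecessorPattern]⟩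
  have hgt : Fintype.card {a // predecessorPattern C i a = .gt} = Fintype.card N - #C - 1 := by
    rw [Fintype.card_subtype, show univ.filter (predecessorPattern C i · = .gt) = (insert i C)ᶜ by
      ext a; simp [predecessorPattern]; tauto, card_compl, card_insert_of_notMem hi]
    omega
  have hcard (c : Ordering) : Fintype.card {a // predecessorPattern C i a = c} =
      Fintype.card {j // compare j (⟨#C, hC⟩ : Fin (Fintype.card N)) = c} := by
    cases c
    · simp [hlt, compare_lt_iff_lt, Fintype.card_subtype, filter_gt_eq_Iio]
    · simp [heq]
    · simp [hgt, compare_gt_iff_gt, Fintype.card_subtype, filter_lt_eq_Ioi]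
      omega
  rw [← Fintype.card_subtype,
    Fintype.card_congr (Equiv.subtypeEquivRight fun τ => predecessors_eq_iff τ hi hC),
    card_equiv_comp_eq _ _ hcard, show (univ : Finset Ordering) = {.lt, .eq, .gt} from rfl]
  simp [hlt, heq, hgt]

lemma factorial_mul_shapleyValue (v : Finset N → ℝ) (i : N) :
    ((Fintype.card N)! : ℝ) * shapleyValue v i =
      ∑ τ : N ≃ Fin (Fintype.card N), marginalVector v τ i := by
  have hmaps : ∀ τ ∈ (univ : Finset (N ≃ Fin (Fintype.card N))),
      predecessors τ i ∈ (univ.erase i).powerset := fun τ _ =>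
    mem_powerset.2 fun a ha => mem_erase.2 ⟨by rintro rfl; simp at ha, mem_univ a⟩
  rw [← sum_fiberwise_of_maps_to hmaps, shapleyValue, mul_sum]
  refine sum_congr rfl fun C hC => ?_
  have hi : i ∉ C := fun h => by simpa using mem_powerset.1 hC h
  rw [sum_congr rfl fun τ hτ => by rw [marginalVector, (mem_filter.1 hτ).2], sum_const,
    card_filter_predecessors_eq hi, nsmul_eq_mul]
  push_cast
  field_simp

end Orderings

theorem shapleyValue_mem_core_general {N : Type*} [Fintype N] [DecidableEq N]
    (v : Finset N → ℝ) (h0 : v ∅ = 0)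
    (hsup : ∀ A B : Finset N, v A + v B ≤ v (A ∪ B) + v (A ∩ B)) :
    ∀ C : Finset N, v C ≤ ∑ i ∈ C, shapleyValue v i := by
  intro C
  have hfac : (0 : ℝ) < (Fintype.card N)! := by exact_mod_cast (Fintype.card N).factorial_pos
  refine le_of_mul_le_mul_left ?_ hfac
  calc ((Fintype.card N)! : ℝ) * v C = ∑ _τ : N ≃ Fin (Fintype.card N), v C := by
        simp [Fintype.card_equiv (Fintype.equivFin N)]
    _ ≤ ∑ τ : N ≃ Fin (Fintype.card N), ∑ i ∈ C, marginalVector v τ i :=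
        sum_le_sum fun τ _ => le_sum_marginalVector v h0 hsup τ.injective C
    _ = ((Fintype.card N)! : ℝ) * ∑ i ∈ C, shapleyValue v i := by
        rw [sum_comm, mul_sum]
        simp only [factorial_mul_shapleyValue]

/-- For a supermodular characteristic function `v` with `v ∅ = 0` on a nonempty
finite set of agents, the Shapley value lies in the core:
for every coalition `C`, `∑_{i ∈ C} φ_i(v) ≥ v(C)`. -/
theorem shapleyValue_mem_core {N : Type*} [Fintype N] [DecidableEq N] [Nonempty N]
    (v : Finset N → ℝ) (h0 : v ∅ = 0)
    (hsup : ∀ A B : Finset N, v A + v B ≤ v (A ∪ B) + v (A ∩ B)) :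
    ∀ C : Finset N, v C ≤ ∑ i ∈ C, shapleyValue v i :=
  shapleyValue_mem_core_general v h0 hsup
end

section
/- For a supermodular characteristic function v on a nonempty finite set of agents N with v(∅) = 0, every marginal vector lies in the core: for every bijection σ : N ≃ {0,…,n−1} and every coalition C ⊆ N, ∑_{i ∈ C} x_σ(i) ≥ v(C), where x_σ(i) = v(P_σ(i) ∪ {i}) − v(P_σ(i)). -/
/-!
Add the members of `C` one at a time in the order `σ`. When `i` is added, the coalition built so
far lies inside the predecessor coalition `P_σ(i)`, and supermodularity says that marginal
contributions only grow along inclusions; so each step raises `v` by at most `x_σ(i)`.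
-/

/-- The predecessor coalition of agent `i` under the ordering (permutation)
`σ : N ≃ Fin n`: the set of agents that come strictly before `i`. -/
def predCoalition {N : Type*} [Fintype N] [DecidableEq N]
    (σ : N ≃ Fin (Fintype.card N)) (i : N) : Finset N :=
  Finset.univ.filter (fun j => σ j < σ i)

open Finset

theorem sub_le_sub_insert_of_supermodular {α β : Type*} [DecidableEq α] [AddCommGroup β]
    [PartialOrder β] [IsOrderedAddMonoid β] {v : Finset α → β}
    (hsup : ∀ A B : Finset α, v A + v B ≤ v (A ∪ B) + v (A ∩ B))
    {S T : Finset α} {i : α} (hST : S ⊆ T) (hi : i ∉ T) :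
    v (insert i S) - v S ≤ v (insert i T) - v T := by
  have hunion : insert i S ∪ T = insert i T := by
    rw [insert_union, union_eq_right.mpr hST]
  have hinter : insert i S ∩ T = S := by
    rw [insert_inter_of_notMem hi, inter_eq_left.mpr hST]
  have := hsup (insert i S) T
  rw [hunion, hinter] at this
  rw [sub_le_sub_iff]
  simpa only [add_comm] using this

theorem subset_predCoalition {N : Type*} [Fintype N] [DecidableEq N]
    (σ : N ≃ Fin (Fintype.card N)) {s : Finset N} {i : N} (hi : i ∉ s)
    (hmax : ∀ j ∈ s, σ j ≤ σ i) : s ⊆ predCoalition σ i := by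
  intro j hj
  have hne : σ j ≠ σ i := σ.injective.ne (ne_of_mem_of_not_mem hj hi)
  simpa [predCoalition] using lt_of_le_of_ne (hmax j hj) hne

theorem self_notMem_predCoalition {N : Type*} [Fintype N] [DecidableEq N]
    (σ : N ≃ Fin (Fintype.card N)) (i : N) : i ∉ predCoalition σ i := by
  simp [predCoalition]

theorem marginalVector_mem_core_general {N : Type*} [Fintype N] [DecidableEq N]
    (v : Finset N → ℝ) (h0 : v ∅ = 0)
    (hsup : ∀ A B : Finset N, v A + v B ≤ v (A ∪ B) + v (A ∩ B)) :
    ∀ (σ : N ≃ Fin (Fintype.card N)) (C : Finset N),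
      v C ≤ ∑ i ∈ C, (v (insert i (predCoalition σ i)) - v (predCoalition σ i)) := by
  intro σ C
  induction C using Finset.induction_on_max_value σ with
  | empty => simp [h0]
  | insert i s hi hmax ih =>
    have hstep : v (insert i s) - v s ≤
        v (insert i (predCoalition σ i)) - v (predCoalition σ i) :=
      sub_le_sub_insert_of_supermodular hsup (subset_predCoalition σ hi hmax)
        (self_notMem_predCoalition σ i)
    rw [sum_insert hi]
    linarith

/-- For a supermodular characteristic function `v` with `v ∅ = 0` on a nonempty
finite set of agents, every marginal vector lies in the core: for every
bijection `σ : N ≃ {0,…,n−1}` and every coalition `C`,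
`∑_{i ∈ C} (v(P_σ(i) ∪ {i}) − v(P_σ(i))) ≥ v(C)`. -/
theorem marginalVector_mem_core {N : Type*} [Fintype N] [DecidableEq N] [Nonempty N]
    (v : Finset N → ℝ) (h0 : v ∅ = 0)
    (hsup : ∀ A B : Finset N, v A + v B ≤ v (A ∪ B) + v (A ∩ B)) :
    ∀ (σ : N ≃ Fin (Fintype.card N)) (C : Finset N),
      v C ≤ ∑ i ∈ C, (v (insert i (predCoalition σ i)) - v (predCoalition σ i)) :=
  marginalVector_mem_core_general v h0 hsup
end

section
/- Under the condition max_{s ∈ S} { ∑_{i ∈ N} max_{a ∈ A} w_i(s,a) } < 1/γ, the Shapley-Bellman operator Υ admits a unique fixed point Q* : N × S × A → ℝ (i.e. ΥQ* = Q*), and for every starting point Q⁰ the sequence of iterates Qᵏ⁺¹ = ΥQᵏ converges to Q* as k → ∞. -/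
/-- The Shapley-Bellman operator:
`(ΥQ)_i(s,a) = w_i(s,a) · ∑_{s′} P(s′|s,a) · [R(s,a) + γ·∑_j max_{a′} Q_j(s′,a′)] − b_i(s)`. -/
noncomputable def sbOp {N S A : Type*} [Fintype N] [Fintype S] [Fintype A] [Nonempty A]
    (P : S → A → S → ℝ) (R : S → A → ℝ) (γ : ℝ)
    (w : N → S → A → ℝ) (b : N → S → ℝ) (Q : N → S → A → ℝ) : N → S → A → ℝ :=
  fun i s a =>
    w i s a * ∑ s' : S, P s a s' *
      (R s a + γ * ∑ j : N, Finset.univ.sup' Finset.univ_nonempty (fun a' => Q j s' a'))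
    - b i s

/-!
Υ factors as `Υ = F ∘ Φ` through the space of state values `S → ℝ`, where
`Φ Q s = ∑ⱼ maxₐ Qⱼ(s,a)` (`sumSup`) and `F v = w · 𝔼_P[R + γ v] − b` (`affinePart`).
With the sup norm on `S → ℝ`, `Φ ∘ F` is a contraction of ratio
`γ · maxₛ ∑ᵢ maxₐ wᵢ(s,a) < 1`, so it has a unique fixed point `v*` by Banach's theorem.
Fixed points of `F ∘ Φ` and `Φ ∘ F` correspond through `F` and `Φ`, and the iterates
of `F ∘ Φ` are the images under `F` of those of `Φ ∘ F`; hence `Q* = F v*`.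
-/

open Finset Filter Function Topology NNReal

theorem ContractingWith.exists_unique_isFixedPt_comp {X Y : Type*} [TopologicalSpace X]
    [MetricSpace Y] [CompleteSpace Y] [Nonempty Y] {F : Y → X} {Φ : X → Y} {K : ℝ≥0}
    (hG : ContractingWith K (Φ ∘ F)) (hF : Continuous F) :
    ∃ x, IsFixedPt (F ∘ Φ) x ∧ (∀ x', IsFixedPt (F ∘ Φ) x' → x' = x) ∧
      ∀ x₀, Tendsto (fun k => (F ∘ Φ)^[k] x₀) atTop (𝓝 x) := by
  have hFΦ : Semiconj F (Φ ∘ F) (F ∘ Φ) := fun _ => rfl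
  have hΦF : Semiconj Φ (F ∘ Φ) (Φ ∘ F) := fun _ => rfl
  refine ⟨F (hG.fixedPoint _), hG.fixedPoint_isFixedPt.map hFΦ, fun x' hx' => ?_, fun x₀ => ?_⟩
  · rw [← hx', comp_apply, hG.fixedPoint_unique (hx'.map hΦF)]
  · rw [← tendsto_add_atTop_iff_nat 1]
    have hiter : ∀ k, F ((Φ ∘ F)^[k] (Φ x₀)) = (F ∘ Φ)^[k + 1] x₀ := fun k => by
      rw [iterate_succ_apply, (hFΦ.iterate_right k).eq]
      rfl
    exact ((hF.tendsto _).comp (hG.tendsto_iterate_fixedPoint (Φ x₀))).congr hiter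

theorem Finset.sup'_sub_sup'_le {ι : Type*} (s : Finset ι) (H : s.Nonempty) (f g : ι → ℝ) :
    s.sup' H f - s.sup' H g ≤ s.sup' H fun i => |f i - g i| := by
  rw [sub_le_iff_le_add]
  refine sup'_le _ _ fun i hi => ?_
  calc f i ≤ |f i - g i| + g i := by linarith [le_abs_self (f i - g i)]
    _ ≤ _ := add_le_add (le_sup' (fun i => |f i - g i|) hi) (le_sup' g hi)

theorem Finset.abs_sup'_sub_sup'_le {ι : Type*} (s : Finset ι) (H : s.Nonempty)
    (f g : ι → ℝ) : |s.sup' H f - s.sup' H g| ≤ s.sup' H fun i => |f i - g i| := by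
  refine abs_sub_le_iff.2 ⟨s.sup'_sub_sup'_le H f g, ?_⟩
  simpa only [abs_sub_comm] using s.sup'_sub_sup'_le H g f

theorem abs_sum_mul_le_norm_of_sum_eq_one {ι : Type*} [Fintype ι] {p : ι → ℝ}
    (hp0 : ∀ i, 0 ≤ p i) (hp1 : ∑ i, p i = 1) (u : ι → ℝ) : |∑ i, p i * u i| ≤ ‖u‖ :=
  calc |∑ i, p i * u i| ≤ ∑ i, p i * ‖u‖ := by
        refine (abs_sum_le_sum_abs _ _).trans (sum_le_sum fun i _ => ?_)
        rw [abs_mul, abs_of_nonneg (hp0 i), ← Real.norm_eq_abs]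
        exact mul_le_mul_of_nonneg_left (norm_le_pi_norm u i) (hp0 i)
    _ = ‖u‖ := by rw [← sum_mul, hp1, one_mul]

namespace ShapleyBellman

variable {N S A : Type*}

noncomputable def sumSup [Fintype N] [Fintype A] [Nonempty A] (Q : N → S → A → ℝ) : S → ℝ :=
  fun s => ∑ j, univ.sup' univ_nonempty (Q j s)

def affinePart [Fintype S] (P : S → A → S → ℝ) (R : S → A → ℝ) (γ : ℝ) (w : N → S → A → ℝ)
    (b : N → S → ℝ) (v : S → ℝ) : N → S → A → ℝ :=
  fun i s a => w i s a * ∑ s', P s a s' * (R s a + γ * v s') - b i s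

theorem sbOp_eq_affinePart_comp_sumSup [Fintype N] [Fintype S] [Fintype A] [Nonempty A]
    (P : S → A → S → ℝ) (R : S → A → ℝ) (γ : ℝ) (w : N → S → A → ℝ) (b : N → S → ℝ) :
    sbOp P R γ w b = affinePart P R γ w b ∘ sumSup :=
  rfl

theorem abs_sumSup_sub_le [Fintype N] [Fintype A] [Nonempty A] (Q Q' : N → S → A → ℝ) (s : S) :
    |sumSup Q s - sumSup Q' s| ≤ ∑ i, univ.sup' univ_nonempty fun a => |Q i s a - Q' i s a| :=
  calc |sumSup Q s - sumSup Q' s|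
      ≤ ∑ i, |univ.sup' univ_nonempty (Q i s) - univ.sup' univ_nonempty (Q' i s)| := by
        rw [sumSup, sumSup, ← sum_sub_distrib]
        exact abs_sum_le_sum_abs _ _
    _ ≤ _ := sum_le_sum fun i _ => univ.abs_sup'_sub_sup'_le _ _ _

variable {P : S → A → S → ℝ} (R : S → A → ℝ) {γ : ℝ} {w : N → S → A → ℝ} (b : N → S → ℝ)

theorem continuous_affinePart [Fintype S] : Continuous (affinePart P R γ w b) := by
  unfold affinePart
  fun_prop

theorem abs_affinePart_sub_le [Fintype S] (hP0 : ∀ s a s', 0 ≤ P s a s')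
    (hP1 : ∀ s a, ∑ s', P s a s' = 1) (hγ : 0 ≤ γ) (hw : ∀ i s a, 0 ≤ w i s a)
    (v v' : S → ℝ) (i : N) (s : S) (a : A) :
    |affinePart P R γ w b v i s a - affinePart P R γ w b v' i s a| ≤ w i s a * (γ * ‖v - v'‖) := by
  have hdiff : affinePart P R γ w b v i s a - affinePart P R γ w b v' i s a
      = w i s a * (γ * ∑ s', P s a s' * (v - v') s') := by
    have hexp : ∑ s', P s a s' * (R s a + γ * v s') - ∑ s', P s a s' * (R s a + γ * v' s')
        = γ * ∑ s', P s a s' * (v - v') s' := by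
      rw [← sum_sub_distrib, mul_sum]
      exact sum_congr rfl fun s' _ => by simp only [Pi.sub_apply]; ring
    simp only [affinePart]
    rw [← hexp]
    ring
  rw [hdiff, abs_mul, abs_mul, abs_of_nonneg (hw i s a), abs_of_nonneg hγ]
  exact mul_le_mul_of_nonneg_left (mul_le_mul_of_nonneg_left
    (abs_sum_mul_le_norm_of_sum_eq_one (hP0 s a) (hP1 s a) _) hγ) (hw i s a)

variable [Fintype N] [Fintype S] [Fintype A] [Nonempty S] [Nonempty A]

noncomputable def maxWeightSum (w : N → S → A → ℝ) : ℝ :=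
  univ.sup' univ_nonempty (fun s => ∑ i, univ.sup' univ_nonempty (w i s))

theorem dist_sumSup_affinePart_le (hP0 : ∀ s a s', 0 ≤ P s a s')
    (hP1 : ∀ s a, ∑ s', P s a s' = 1) (hγ : 0 ≤ γ) (hw : ∀ i s a, 0 ≤ w i s a)
    (v v' : S → ℝ) :
    dist (sumSup (affinePart P R γ w b v)) (sumSup (affinePart P R γ w b v'))
      ≤ γ * maxWeightSum w * dist v v' := by
  have hd : 0 ≤ γ * dist v v' := mul_nonneg hγ dist_nonneg
  refine dist_pi_le_iff'.2 fun s => ?_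
  rw [Real.dist_eq, dist_eq_norm]
  calc _ ≤ _ := abs_sumSup_sub_le _ _ s
    _ ≤ ∑ i, univ.sup' univ_nonempty (w i s) * (γ * ‖v - v'‖) := by
        refine sum_le_sum fun i _ => sup'_le _ _ fun a _ => ?_
        refine (abs_affinePart_sub_le R b hP0 hP1 hγ hw v v' i s a).trans ?_
        exact mul_le_mul_of_nonneg_right (le_sup' (w i s) (mem_univ a)) hd
    _ = (∑ i, univ.sup' univ_nonempty (w i s)) * (γ * ‖v - v'‖) := (sum_mul _ _ _).symm
    _ ≤ maxWeightSum w * (γ * ‖v - v'‖) := by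
        refine mul_le_mul_of_nonneg_right ?_ hd
        exact le_sup' (fun s => ∑ i, univ.sup' univ_nonempty (w i s)) (mem_univ s)
    _ = γ * maxWeightSum w * ‖v - v'‖ := by ring

theorem contractingWith_sumSup_comp_affinePart (hP0 : ∀ s a s', 0 ≤ P s a s')
    (hP1 : ∀ s a, ∑ s', P s a s' = 1) (hγ : 0 < γ) (hw : ∀ i s a, 0 ≤ w i s a)
    (hcond : maxWeightSum w < 1 / γ) :
    ContractingWith (γ * maxWeightSum w).toNNReal (sumSup ∘ affinePart P R γ w b) := by
  refine ⟨Real.toNNReal_lt_one.2 ?_, LipschitzWith.of_dist_le_mul fun v v' => ?_⟩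
  · simpa only [mul_one_div_cancel hγ.ne'] using mul_lt_mul_of_pos_left hcond hγ
  · refine (dist_sumSup_affinePart_le R b hP0 hP1 hγ.le hw v v').trans ?_
    exact mul_le_mul_of_nonneg_right (Real.le_coe_toNNReal _) dist_nonneg

end ShapleyBellman

theorem sbOp_fixed_point_general {N S A : Type*} [Fintype N] [Fintype S] [Fintype A]
    [Nonempty S] [Nonempty A]
    (P : S → A → S → ℝ) (R : S → A → ℝ) (γ : ℝ)
    (w : N → S → A → ℝ) (b : N → S → ℝ)
    (hP0 : ∀ s a s', 0 ≤ P s a s') (hP1 : ∀ s a, ∑ s' : S, P s a s' = 1)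
    (hγ0 : 0 < γ)
    (hw : ∀ i s a, 0 < w i s a)
    (hcond : Finset.univ.sup' Finset.univ_nonempty
        (fun s : S => ∑ i : N, Finset.univ.sup' Finset.univ_nonempty (fun a : A => w i s a))
      < 1 / γ) :
    ∃ Qstar : N → S → A → ℝ,
      sbOp P R γ w b Qstar = Qstar ∧
      (∀ Q' : N → S → A → ℝ, sbOp P R γ w b Q' = Q' → Q' = Qstar) ∧
      (∀ (Q0 : N → S → A → ℝ) (i : N) (s : S) (a : A),
        Filter.Tendsto (fun k : ℕ => (sbOp P R γ w b)^[k] Q0 i s a)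
          Filter.atTop (nhds (Qstar i s a))) := by
  have hG := ShapleyBellman.contractingWith_sumSup_comp_affinePart R b hP0 hP1 hγ0
    (fun i s a => (hw i s a).le) hcond
  obtain ⟨Q, hfix, huniq, hlim⟩ :=
    hG.exists_unique_isFixedPt_comp (ShapleyBellman.continuous_affinePart R b)
  rw [ShapleyBellman.sbOp_eq_affinePart_comp_sumSup]
  refine ⟨Q, hfix, huniq, fun Q0 i s a => ?_⟩
  exact tendsto_pi_nhds.1 (tendsto_pi_nhds.1 (tendsto_pi_nhds.1 (hlim Q0) i) s) a

/-- Under the condition `max_s { ∑_i max_a w_i(s,a) } < 1/γ`, the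
Shapley-Bellman operator admits a unique fixed point `Q*`, and from any
starting point `Q⁰` the iterates `Qᵏ⁺¹ = ΥQᵏ` converge to `Q*`. -/
theorem sbOp_fixed_point {N S A : Type*} [Fintype N] [Fintype S] [Fintype A]
    [Nonempty N] [Nonempty S] [Nonempty A]
    (P : S → A → S → ℝ) (R : S → A → ℝ) (γ : ℝ)
    (w : N → S → A → ℝ) (b : N → S → ℝ)
    (hP0 : ∀ s a s', 0 ≤ P s a s') (hP1 : ∀ s a, ∑ s' : S, P s a s' = 1)
    (hγ0 : 0 < γ) (hγ1 : γ < 1)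
    (hw : ∀ i s a, 0 < w i s a) (hb : ∀ i s, 0 ≤ b i s)
    (hcond : Finset.univ.sup' Finset.univ_nonempty
        (fun s : S => ∑ i : N, Finset.univ.sup' Finset.univ_nonempty (fun a : A => w i s a))
      < 1 / γ) :
    ∃ Qstar : N → S → A → ℝ,
      sbOp P R γ w b Qstar = Qstar ∧
      (∀ Q' : N → S → A → ℝ, sbOp P R γ w b Q' = Q' → Q' = Qstar) ∧
      (∀ (Q0 : N → S → A → ℝ) (i : N) (s : S) (a : A),
        Filter.Tendsto (fun k : ℕ => (sbOp P R γ w b)^[k] Q0 i s a)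
          Filter.atTop (nhds (Qstar i s a))) :=
  sbOp_fixed_point_general P R γ w b hP0 hP1 hγ0 hw hcond
end

section
/- Under the condition max_{s ∈ S} { ∑_{i ∈ N} max_{a ∈ A} w_i(s,a) } < 1/γ, the Shapley-Bellman optimality equation has exactly one solution: there exists a unique Q* : N × S × A → ℝ satisfying Q*_i(s,a) = w_i(s,a) · ∑_{s′ ∈ S} P(s′|s,a) · [R(s,a) + γ · ∑_{j ∈ N} max_{a′ ∈ A} Q*_j(s′,a′)] − b_i(s) for all i ∈ N, s ∈ S, a ∈ A, and repeated application of the Shapley-Bellman operator from any initial Q converges to Q*. -/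
open Finset Function

theorem abs_sup'_sub_sup'_le_dist {ι : Type*} [Fintype ι] [Nonempty ι] (f g : ι → ℝ) :
    |univ.sup' univ_nonempty f - univ.sup' univ_nonempty g| ≤ dist f g := by
  have hle : ∀ f g : ι → ℝ, univ.sup' univ_nonempty f ≤ univ.sup' univ_nonempty g + dist f g :=
    fun f g => sup'_le _ _ fun x _ => by
      have hx : f x - g x ≤ dist f g :=
        (le_abs_self _).trans ((Real.dist_eq _ _).symm.le.trans (dist_le_pi_dist f g x))
      linarith [le_sup' g (mem_univ x)]
  rw [abs_sub_le_iff]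
  constructor <;> linarith [hle f g, hle g f, dist_comm f g]

theorem abs_sum_mul_le_of_sum_eq_one {ι : Type*} (s : Finset ι) {p x : ι → ℝ} {C : ℝ}
    (hp0 : ∀ i ∈ s, 0 ≤ p i) (hp1 : ∑ i ∈ s, p i = 1) (hx : ∀ i ∈ s, |x i| ≤ C) :
    |∑ i ∈ s, p i * x i| ≤ C :=
  calc |∑ i ∈ s, p i * x i| ≤ ∑ i ∈ s, p i * |x i| := by
        refine (abs_sum_le_sum_abs _ _).trans_eq (sum_congr rfl fun i hi => ?_)
        rw [abs_mul, abs_of_nonneg (hp0 i hi)]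
    _ ≤ ∑ i ∈ s, p i * C := sum_le_sum fun i hi => mul_le_mul_of_nonneg_left (hx i hi) (hp0 i hi)
    _ = C := by rw [← sum_mul, hp1, one_mul]

/-- Q-functions regrouped by state, so that the sup norm over `S` of the `ℓ¹` norm over `N` of
the sup norm over `A` is `‖Q‖ = max_s ∑_i max_a |Q_i(s,a)|`. -/
abbrev ShapleyQ (N S A : Type*) := S → PiLp 1 fun _ : N => A → ℝ

def shapleyQEquiv (N S A : Type*) : (N → S → A → ℝ) ≃ ShapleyQ N S A where
  toFun Q s := WithLp.toLp 1 fun i => Q i s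
  invFun X i s := X s i
  left_inv _ := rfl
  right_inv _ := rfl

section ShapleyBellman

variable {N S A : Type*} [Fintype N] [Fintype S] [Fintype A] [Nonempty A]

noncomputable def jointValue (Q : N → S → A → ℝ) (s : S) : ℝ :=
  ∑ j, univ.sup' univ_nonempty (Q j s)

theorem abs_jointValue_sub_le_dist (X Y : ShapleyQ N S A) (s : S) :
    |jointValue ((shapleyQEquiv N S A).symm X) s - jointValue ((shapleyQEquiv N S A).symm Y) s|
      ≤ dist X Y :=
  calc _ ≤ ∑ j, |univ.sup' univ_nonempty (X s j) - univ.sup' univ_nonempty (Y s j)| := by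
        rw [jointValue, jointValue, ← sum_sub_distrib]
        exact abs_sum_le_sum_abs _ _
    _ ≤ ∑ j, dist (X s j) (Y s j) := sum_le_sum fun j _ => abs_sup'_sub_sup'_le_dist _ _
    _ = dist (X s) (Y s) := (PiLp.dist_eq_of_L1 _ _).symm
    _ ≤ dist X Y := dist_le_pi_dist X Y s

variable (P : S → A → S → ℝ) (R : S → A → ℝ) (γ : ℝ) (w : N → S → A → ℝ) (b : N → S → ℝ)

theorem sbOp_sub_sbOp (Q Q' : N → S → A → ℝ) (i : N) (s : S) (a : A) :
    sbOp P R γ w b Q i s a - sbOp P R γ w b Q' i s a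
      = w i s a * γ * ∑ s', P s a s' * (jointValue Q s' - jointValue Q' s') := by
  rw [sbOp, sbOp, sub_sub_sub_cancel_right, ← mul_sub, ← sum_sub_distrib, mul_assoc,
    mul_sum _ _ γ]
  exact congrArg _ (sum_congr rfl fun _ _ => by rw [jointValue, jointValue]; ring)

variable {P γ w}

theorem abs_sbOp_sub_sbOp_le (hP0 : ∀ s a s', 0 ≤ P s a s') (hP1 : ∀ s a, ∑ s', P s a s' = 1)
    (hγ : 0 ≤ γ) (hw : ∀ i s a, 0 ≤ w i s a) (X Y : ShapleyQ N S A) (i : N) (s : S) (a : A) :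
    |sbOp P R γ w b ((shapleyQEquiv N S A).symm X) i s a
        - sbOp P R γ w b ((shapleyQEquiv N S A).symm Y) i s a| ≤ w i s a * γ * dist X Y := by
  rw [sbOp_sub_sbOp, abs_mul, abs_of_nonneg (mul_nonneg (hw i s a) hγ)]
  exact mul_le_mul_of_nonneg_left (abs_sum_mul_le_of_sum_eq_one _ (fun s' _ => hP0 s a s')
    (hP1 s a) fun s' _ => abs_jointValue_sub_le_dist X Y s') (mul_nonneg (hw i s a) hγ)

variable [Nonempty S]

noncomputable def weightBound (w : N → S → A → ℝ) : ℝ :=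
  univ.sup' univ_nonempty fun s => ∑ i, univ.sup' univ_nonempty (w i s)

theorem weightBound_nonneg (hw : ∀ i s a, 0 ≤ w i s a) : 0 ≤ weightBound w :=
  le_sup'_of_le _ (mem_univ (Classical.arbitrary S)) <| sum_nonneg fun i _ =>
    le_sup'_of_le _ (mem_univ (Classical.arbitrary A)) (hw i _ _)

theorem dist_conj_sbOp_le (hP0 : ∀ s a s', 0 ≤ P s a s') (hP1 : ∀ s a, ∑ s', P s a s' = 1)
    (hγ : 0 ≤ γ) (hw : ∀ i s a, 0 ≤ w i s a) (X Y : ShapleyQ N S A) :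
    dist ((shapleyQEquiv N S A).conj (sbOp P R γ w b) X)
        ((shapleyQEquiv N S A).conj (sbOp P R γ w b) Y) ≤ γ * weightBound w * dist X Y := by
  have hK := weightBound_nonneg hw
  refine (dist_pi_le_iff (by positivity)).2 fun s => ?_
  rw [PiLp.dist_eq_of_L1]
  calc _ ≤ ∑ i, univ.sup' univ_nonempty (w i s) * γ * dist X Y := by
        refine sum_le_sum fun i _ => (dist_pi_le_iff ?_).2 fun a => ?_
        · have := le_sup'_of_le (w i s) (mem_univ (Classical.arbitrary A)) (hw i s _)
          positivity
        rw [Real.dist_eq]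
        refine (abs_sbOp_sub_sbOp_le R b hP0 hP1 hγ hw X Y i s a).trans ?_
        gcongr
        exact le_sup' (w i s) (mem_univ a)
    _ = (∑ i, univ.sup' univ_nonempty (w i s)) * γ * dist X Y := by rw [← sum_mul, ← sum_mul]
    _ ≤ weightBound w * γ * dist X Y := by
        gcongr
        exact le_sup' (fun s => ∑ i, univ.sup' univ_nonempty (w i s)) (mem_univ s)
    _ = γ * weightBound w * dist X Y := by ring

theorem contractingWith_conj_sbOp (hP0 : ∀ s a s', 0 ≤ P s a s')
    (hP1 : ∀ s a, ∑ s', P s a s' = 1) (hγ : 0 ≤ γ) (hw : ∀ i s a, 0 ≤ w i s a)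
    (hcontr : γ * weightBound w < 1) :
    ContractingWith (γ * weightBound w).toNNReal ((shapleyQEquiv N S A).conj (sbOp P R γ w b)) :=
  ⟨Real.toNNReal_lt_one.2 hcontr, LipschitzWith.of_dist_le_mul fun X Y => by
    rw [Real.coe_toNNReal _ (mul_nonneg hγ (weightBound_nonneg hw))]
    exact dist_conj_sbOp_le R b hP0 hP1 hγ hw X Y⟩

end ShapleyBellman

theorem sb_optimality_equation_unique_solution_general {N S A : Type*}
    [Fintype N] [Fintype S] [Fintype A] [Nonempty S] [Nonempty A]
    (P : S → A → S → ℝ) (R : S → A → ℝ) (γ : ℝ)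
    (w : N → S → A → ℝ) (b : N → S → ℝ)
    (hP0 : ∀ s a s', 0 ≤ P s a s') (hP1 : ∀ s a, ∑ s' : S, P s a s' = 1)
    (hγ0 : 0 < γ)
    (hw : ∀ i s a, 0 < w i s a)
    (hcond : Finset.univ.sup' Finset.univ_nonempty
        (fun s : S => ∑ i : N, Finset.univ.sup' Finset.univ_nonempty (fun a : A => w i s a))
      < 1 / γ) :
    ∃ Qstar : N → S → A → ℝ,
      (∀ (i : N) (s : S) (a : A),
        Qstar i s a = w i s a * ∑ s' : S, P s a s' *
          (R s a + γ * ∑ j : N,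
            Finset.univ.sup' Finset.univ_nonempty (fun a' => Qstar j s' a'))
          - b i s) ∧
      (∀ Q' : N → S → A → ℝ,
        (∀ (i : N) (s : S) (a : A),
          Q' i s a = w i s a * ∑ s' : S, P s a s' *
            (R s a + γ * ∑ j : N,
              Finset.univ.sup' Finset.univ_nonempty (fun a' => Q' j s' a'))
            - b i s) → Q' = Qstar) ∧
      (∀ (Q0 : N → S → A → ℝ) (i : N) (s : S) (a : A),
        Filter.Tendsto (fun k : ℕ => (sbOp P R γ w b)^[k] Q0 i s a)
          Filter.atTop (nhds (Qstar i s a))) := by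
  set e := shapleyQEquiv N S A
  set T := e.conj (sbOp P R γ w b)
  have hT : ContractingWith _ T := contractingWith_conj_sbOp R b hP0 hP1 hγ0.le
    (fun i s a => (hw i s a).le) ((lt_div_iff₀' hγ0).1 hcond)
  have hsemi : Semiconj e (sbOp P R γ w b) T := fun Q => by simp [T]
  have hsemi_symm : Semiconj e.symm T (sbOp P R γ w b) := fun X => by simp [T]
  refine ⟨e.symm (hT.fixedPoint T), fun i s a => ?_, fun Q hQ => ?_, fun Q i s a => ?_⟩
  · exact (congrFun₃ (hT.fixedPoint_isFixedPt.map hsemi_symm) i s a).symm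
  · rw [e.eq_symm_apply]
    exact hT.fixedPoint_unique (IsFixedPt.map (funext₃ fun i s a => (hQ i s a).symm) hsemi)
  · have hiter : ∀ k, (sbOp P R γ w b)^[k] Q i s a = T^[k] (e Q) s i a := fun k => by
      rw [← hsemi.iterate_right k Q]; rfl
    have heval : Continuous fun X : ShapleyQ N S A => X s i a := by fun_prop
    simp only [hiter]
    exact (heval.tendsto _).comp (hT.tendsto_iterate_fixedPoint (e Q))

/-- Under the condition `max_s { ∑_i max_a w_i(s,a) } < 1/γ`, the
Shapley-Bellman optimality equation has exactly one solution `Q*`, and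
repeated application of the Shapley-Bellman operator from any initial `Q`
converges to `Q*`. -/
theorem sb_optimality_equation_unique_solution {N S A : Type*}
    [Fintype N] [Fintype S] [Fintype A] [Nonempty N] [Nonempty S] [Nonempty A]
    (P : S → A → S → ℝ) (R : S → A → ℝ) (γ : ℝ)
    (w : N → S → A → ℝ) (b : N → S → ℝ)
    (hP0 : ∀ s a s', 0 ≤ P s a s') (hP1 : ∀ s a, ∑ s' : S, P s a s' = 1)
    (hγ0 : 0 < γ) (hγ1 : γ < 1)
    (hw : ∀ i s a, 0 < w i s a) (hb : ∀ i s, 0 ≤ b i s)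
    (hcond : Finset.univ.sup' Finset.univ_nonempty
        (fun s : S => ∑ i : N, Finset.univ.sup' Finset.univ_nonempty (fun a : A => w i s a))
      < 1 / γ) :
    ∃ Qstar : N → S → A → ℝ,
      (∀ (i : N) (s : S) (a : A),
        Qstar i s a = w i s a * ∑ s' : S, P s a s' *
          (R s a + γ * ∑ j : N,
            Finset.univ.sup' Finset.univ_nonempty (fun a' => Qstar j s' a'))
          - b i s) ∧
      (∀ Q' : N → S → A → ℝ,
        (∀ (i : N) (s : S) (a : A),
          Q' i s a = w i s a * ∑ s' : S, P s a s' *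
            (R s a + γ * ∑ j : N,
              Finset.univ.sup' Finset.univ_nonempty (fun a' => Q' j s' a'))
            - b i s) → Q' = Qstar) ∧
      (∀ (Q0 : N → S → A → ℝ) (i : N) (s : S) (a : A),
        Filter.Tendsto (fun k : ℕ => (sbOp P R γ w b)^[k] Q0 i s a)
          Filter.atTop (nhds (Qstar i s a))) :=
  sb_optimality_equation_unique_solution_general P R γ w b hP0 hP1 hγ0 hw hcond
end

section
/- If a global Q-function Qg : S × A → ℝ satisfies the Bellman optimality equation Qg(s,a) = ∑_{s′ ∈ S} P(s′|s,a)·[R(s,a) + γ·max_{a′ ∈ A} Qg(s′,a′)], and Q : N × S × A → ℝ satisfies, for all i, s, a: Q_i(s,a) = w_i(s,a)·Qg(s,a) − b_i(s), with ∑_{i ∈ N} b_i(s)/w_i(s,a) = 0, and the efficiency condition max_{a ∈ A} Qg(s,a) = ∑_{i ∈ N} max_{a ∈ A} Q_i(s,a) holds for every s ∈ S, then Q satisfies the Shapley-Bellman optimality equation: Q_i(s,a) = w_i(s,a)·∑_{s′ ∈ S} P(s′|s,a)·[R(s,a) + γ·∑_{j ∈ N} max_{a′ ∈ A} Q_j(s′,a′)]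 − b_i(s) for all i, s, a. -/
theorem sb_optimality_of_bellman_general {N S A : Type*}
    [Fintype N] [Fintype S] [Fintype A] [Nonempty A]
    (P : S → A → S → ℝ) (R : S → A → ℝ) (γ : ℝ)
    (w : N → S → A → ℝ) (b : N → S → ℝ)
    (Qg : S → A → ℝ)
    (hBellman : ∀ (s : S) (a : A),
      Qg s a = ∑ s' : S, P s a s' *
        (R s a + γ * Finset.univ.sup' Finset.univ_nonempty (fun a' => Qg s' a')))
    (Q : N → S → A → ℝ)
    (hproj : ∀ (i : N) (s : S) (a : A), Q i s a = w i s a * Qg s a - b i s)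
    (heff : ∀ s : S,
      Finset.univ.sup' Finset.univ_nonempty (fun a : A => Qg s a) =
        ∑ i : N, Finset.univ.sup' Finset.univ_nonempty (fun a : A => Q i s a)) :
    ∀ (i : N) (s : S) (a : A),
      Q i s a = w i s a * ∑ s' : S, P s a s' *
        (R s a + γ * ∑ j : N,
          Finset.univ.sup' Finset.univ_nonempty (fun a' => Q j s' a'))
        - b i s := by
  intro i s a
  simp_rw [hproj i s a, hBellman s a, heff]

/-- Derivation of the Shapley-Bellman optimality equation: if the global
Q-function `Qg` satisfies the Bellman optimality equation, `Q` is related to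
`Qg` by the affine projection `Q_i(s,a) = w_i(s,a)·Qg(s,a) − b_i(s)` with
`∑_i b_i(s)/w_i(s,a) = 0`, and the efficiency condition
`max_a Qg(s,a) = ∑_i max_a Q_i(s,a)` holds, then `Q` satisfies the
Shapley-Bellman optimality equation. -/
theorem sb_optimality_of_bellman {N S A : Type*}
    [Fintype N] [Fintype S] [Fintype A] [Nonempty N] [Nonempty S] [Nonempty A]
    (P : S → A → S → ℝ) (R : S → A → ℝ) (γ : ℝ)
    (w : N → S → A → ℝ) (b : N → S → ℝ)
    (hP0 : ∀ s a s', 0 ≤ P s a s') (hP1 : ∀ s a, ∑ s' : S, P s a s' = 1)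
    (hγ0 : 0 < γ) (hγ1 : γ < 1)
    (hw : ∀ i s a, 0 < w i s a) (hb : ∀ i s, 0 ≤ b i s)
    (Qg : S → A → ℝ)
    (hBellman : ∀ (s : S) (a : A),
      Qg s a = ∑ s' : S, P s a s' *
        (R s a + γ * Finset.univ.sup' Finset.univ_nonempty (fun a' => Qg s' a')))
    (Q : N → S → A → ℝ)
    (hproj : ∀ (i : N) (s : S) (a : A), Q i s a = w i s a * Qg s a - b i s)
    (hzero : ∀ (s : S) (a : A), ∑ i : N, b i s / w i s a = 0)
    (heff : ∀ s : S,
      Finset.univ.sup' Finset.univ_nonempty (fun a : A => Qg s a) =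
        ∑ i : N, Finset.univ.sup' Finset.univ_nonempty (fun a : A => Q i s a)) :
    ∀ (i : N) (s : S) (a : A),
      Q i s a = w i s a * ∑ s' : S, P s a s' *
        (R s a + γ * ∑ j : N,
          Finset.univ.sup' Finset.univ_nonempty (fun a' => Q j s' a'))
        - b i s :=
  sb_optimality_of_bellman_general P R γ w b Qg hBellman Q hproj heff
end
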